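/- arXiv:1801.04537 — 8 statements merged into one kernel-verified Lean document; each statement's English description precedes it below -/
import Mathlib

section
/- Any two distinct columns of the sparse Kerdock matrix S^m sharing the same indices a2 and b (hence with a1^1 ≠ a1^2) are orthogonal: the sum over all rows (u1, u2) of S^m_{(u1,u2),(a1^1,a2,b)} · S^m_{(u1,u2),(a1^2,a2,b)} equals 0. -/
/-!
For a fixed `u1`, the condition `u1 (P b) + u2 = a2` singles out exactly one `u2`, so the inner
product of the two columns is `2⁻ᵐ ∑_{u1} (-1)^⟨u1, a1¹⟩ (-1)^⟨u1, a1²⟩ = 2⁻ᵐ ∑_{u1} (-1)^⟨u1, a1¹ + a1²⟩`.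
This is the sum of a nontrivial character of `𝔽₂ᵐ`, hence zero.
-/

/-- Binary vectors of length `m`. -/
abbrev BV (m : ℕ) := Fin m → ZMod 2

/-- Row indices of the sparse Kerdock matrix: pairs `(u1, u2)`. -/
abbrev KRow (m : ℕ) := BV m × BV m

/-- Column indices of the sparse Kerdock matrix: triples `(a1, a2, b)`. -/
abbrev KCol (m : ℕ) := BV m × BV m × BV m

/-- `P` is a Kerdock set: a family of symmetric binary matrices such that the sum of
any two distinct members is invertible. -/
def IsKerdockSet {m : ℕ} (P : BV m → Matrix (Fin m) (Fin m) (ZMod 2)) : Prop :=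
  (∀ b, (P b).IsSymm) ∧ ∀ b b', b ≠ b' → IsUnit (P b + P b')

/-- Entry of the sparse Kerdock matrix `S^m` at row `(u1, u2)` and column `(a1, a2, b)`:
`2^{-m/2} * (-1)^{⟨u1, a1⟩}` if `u1 (P b) + u2 = a2`, and `0` otherwise. -/
noncomputable def kerdockEntry (m : ℕ) (P : BV m → Matrix (Fin m) (Fin m) (ZMod 2))
    (u : KRow m) (c : KCol m) : ℝ :=
  if Matrix.vecMul u.1 (P c.2.2) + u.2 = c.2.1 then
    (Real.sqrt (2 ^ m))⁻¹ * (-1 : ℝ) ^ ((∑ i, u.1 i * c.1 i).val)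
  else 0

open Matrix

noncomputable def signChar : AddChar (ZMod 2) ℝ :=
  AddChar.zmodChar 2 (by norm_num : (-1 : ℝ) ^ 2 = 1)

lemma signChar_apply (x : ZMod 2) : signChar x = (-1) ^ x.val := rfl

lemma sum_signChar_dotProduct_eq_zero {ι : Type*} [Fintype ι] [DecidableEq ι]
    {a : ι → ZMod 2} (ha : a ≠ 0) : ∑ u : ι → ZMod 2, signChar (u ⬝ᵥ a) = 0 := by
  obtain ⟨j, hj⟩ := Function.ne_iff.1 ha
  have haj : a j = 1 := (by decide : ∀ x : ZMod 2, x ≠ 0 → x = 1) _ hj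
  let ψ := signChar.compAddMonoidHom
    (AddMonoidHom.mk' (· ⬝ᵥ a) fun u v => add_dotProduct u v a)
  have hψ : ψ ≠ 1 := AddChar.ne_one_iff.2 ⟨Pi.single j 1, by
    norm_num [ψ, signChar_apply, single_dotProduct, haj, ZMod.val_one]⟩
  exact AddChar.sum_eq_zero_of_ne_one hψ

lemma sum_kerdockEntry_mul_kerdockEntry_fixed_fst (m : ℕ)
    (P : BV m → Matrix (Fin m) (Fin m) (ZMod 2)) (u1 a11 a12 a2 b : BV m) :
    ∑ u2 : BV m, kerdockEntry m P (u1, u2) (a11, a2, b) * kerdockEntry m P (u1, u2) (a12, a2, b) =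
      ((2 : ℝ) ^ m)⁻¹ * signChar (u1 ⬝ᵥ (a11 + a12)) := by
  have hrow (u2 : BV m) : vecMul u1 (P b) + u2 = a2 ↔ u2 = a2 - vecMul u1 (P b) :=
    eq_sub_iff_add_eq'.symm
  simp only [kerdockEntry, hrow, ite_mul, zero_mul, mul_ite, mul_zero, Finset.sum_ite_eq',
    Finset.mem_univ, if_true]
  have hnorm : (√(2 ^ m))⁻¹ * (√(2 ^ m))⁻¹ = ((2 : ℝ) ^ m)⁻¹ := by
    rw [← mul_inv, Real.mul_self_sqrt (by positivity)]
  rw [dotProduct_add, AddChar.map_add_eq_mul, ← hnorm]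
  simp only [signChar_apply, dotProduct]
  ring

theorem sparse_kerdock_same_a2_b_orthogonal_general (m : ℕ)
    (P : BV m → Matrix (Fin m) (Fin m) (ZMod 2))
    (a11 a12 a2 b : BV m) (ha : a11 ≠ a12) :
    ∑ u : KRow m, kerdockEntry m P u (a11, a2, b) * kerdockEntry m P u (a12, a2, b) = 0 := by
  have hsum : a11 + a12 ≠ 0 := fun h =>
    ha (funext fun i => CharTwo.add_eq_zero.1 (congrFun h i))
  rw [Fintype.sum_prod_type]
  simp only [sum_kerdockEntry_mul_kerdockEntry_fixed_fst]
  rw [← Finset.mul_sum, sum_signChar_dotProduct_eq_zero hsum, mul_zero]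

/-- Two distinct columns of `S^m` sharing the same `a2` and `b` are orthogonal. -/
theorem sparse_kerdock_same_a2_b_orthogonal (m : ℕ) (hm : 1 ≤ m)
    (P : BV m → Matrix (Fin m) (Fin m) (ZMod 2)) (hP : IsKerdockSet P)
    (a11 a12 a2 b : BV m) (ha : a11 ≠ a12) :
    ∑ u : KRow m, kerdockEntry m P u (a11, a2, b) * kerdockEntry m P u (a12, a2, b) = 0 :=
  sparse_kerdock_same_a2_b_orthogonal_general m P a11 a12 a2 b ha
end

section
/- Two columns of the sparse Kerdock matrix S^m indexed by (a1^1, a2^1, b1) and (a1^2, a2^2, b2) with b1 ≠ b2 have exactly one row (u1, u2) at which both columns are nonzero, and the absolute value of their inner product (the sum over all rows of the product of the two entries) equals 2^{-m}. -/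
lemma bv_add_self {m : ℕ} (v : BV m) : v + v = 0 := by
  ext i; exact CharTwo.add_self_eq_zero _

lemma kerdock_sqrt_ne (m : ℕ) : (Real.sqrt (2 ^ m))⁻¹ ≠ 0 := by
  positivity

lemma kerdockEntry_eq_zero {m : ℕ} (P : BV m → Matrix (Fin m) (Fin m) (ZMod 2))
    (u : KRow m) (c : KCol m) (h : ¬ (Matrix.vecMul u.1 (P c.2.2) + u.2 = c.2.1)) :
    kerdockEntry m P u c = 0 := by
  simp [kerdockEntry, h]

lemma kerdockEntry_ne_zero {m : ℕ} (P : BV m → Matrix (Fin m) (Fin m) (ZMod 2))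
    (u : KRow m) (c : KCol m) (h : Matrix.vecMul u.1 (P c.2.2) + u.2 = c.2.1) :
    kerdockEntry m P u c ≠ 0 := by
  simp only [kerdockEntry, if_pos h]
  exact mul_ne_zero (kerdock_sqrt_ne m) (by simp [pow_ne_zero])

/-- Two columns of `S^m` with `b1 ≠ b2` have exactly one common support row, and the
absolute value of their inner product equals `2^{-m}`. -/
theorem sparse_kerdock_diff_b_inner (m : ℕ) (hm : 1 ≤ m)
    (P : BV m → Matrix (Fin m) (Fin m) (ZMod 2)) (hP : IsKerdockSet P)
    (a11 a21 b1 a12 a22 b2 : BV m) (hb : b1 ≠ b2) :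
    (∃! u : KRow m,
        kerdockEntry m P u (a11, a21, b1) ≠ 0 ∧ kerdockEntry m P u (a12, a22, b2) ≠ 0) ∧
    |∑ u : KRow m, kerdockEntry m P u (a11, a21, b1) * kerdockEntry m P u (a12, a22, b2)|
      = ((2 : ℝ) ^ m)⁻¹ := by
  set M := P b1 + P b2 with hMdef
  have hM : IsUnit M := hP.2 b1 b2 hb
  have hDet : IsUnit M.det := (Matrix.isUnit_iff_isUnit_det M).mp hM
  set u1 : BV m := Matrix.vecMul (a21 + a22) M⁻¹ with hu1def
  have hkey : Matrix.vecMul u1 M = a21 + a22 := by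
    rw [hu1def, Matrix.vecMul_vecMul, Matrix.nonsing_inv_mul M hDet, Matrix.vecMul_one]
  set u2 : BV m := Matrix.vecMul u1 (P b1) + a21 with hu2def
  -- the characterization of common support rows
  have hchar : ∀ u : KRow m,
      (Matrix.vecMul u.1 (P b1) + u.2 = a21 ∧ Matrix.vecMul u.1 (P b2) + u.2 = a22)
      ↔ u = (u1, u2) := by
    intro u
    constructor
    · rintro ⟨h1, h2⟩
      have hsum : Matrix.vecMul u.1 M = a21 + a22 := by
        rw [hMdef, Matrix.vecMul_add]
        calc Matrix.vecMul u.1 (P b1) + Matrix.vecMul u.1 (P b2)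
            = (Matrix.vecMul u.1 (P b1) + u.2) + (Matrix.vecMul u.1 (P b2) + u.2) := by
              rw [add_add_add_comm, bv_add_self, add_zero]
          _ = a21 + a22 := by rw [h1, h2]
      have hu1 : u.1 = u1 := by
        rw [hu1def, ← hsum, Matrix.vecMul_vecMul, Matrix.mul_nonsing_inv M hDet,
          Matrix.vecMul_one]
      have hu2 : u.2 = u2 := by
        rw [hu2def, ← hu1, ← h1, ← add_assoc, bv_add_self, zero_add]
      exact Prod.ext hu1 hu2
    · rintro rfl
      constructor
      · show Matrix.vecMul u1 (P b1) + u2 = a21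
        rw [hu2def, ← add_assoc, bv_add_self, zero_add]
      · show Matrix.vecMul u1 (P b2) + u2 = a22
        rw [hu2def]
        have : Matrix.vecMul u1 (P b2) + (Matrix.vecMul u1 (P b1) + a21)
            = Matrix.vecMul u1 M + a21 := by
          rw [hMdef, Matrix.vecMul_add]; abel
        rw [this, hkey, add_comm a21 a22, add_assoc, bv_add_self, add_zero]
  have hsup : ∀ u : KRow m,
      (kerdockEntry m P u (a11, a21, b1) ≠ 0 ∧ kerdockEntry m P u (a12, a22, b2) ≠ 0)
      ↔ u = (u1, u2) := by
    intro u
    rw [← hchar u]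
    constructor
    · rintro ⟨h1, h2⟩
      constructor
      · by_contra h; exact h1 (kerdockEntry_eq_zero P u _ h)
      · by_contra h; exact h2 (kerdockEntry_eq_zero P u _ h)
    · rintro ⟨h1, h2⟩
      exact ⟨kerdockEntry_ne_zero P u _ h1, kerdockEntry_ne_zero P u _ h2⟩
  constructor
  · exact ⟨(u1, u2), (hsup _).mpr rfl, fun u hu => (hsup u).mp hu⟩
  · have hcond := (hchar (u1, u2)).mpr rfl
    have hsum : ∑ u : KRow m,
        kerdockEntry m P u (a11, a21, b1) * kerdockEntry m P u (a12, a22, b2)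
        = kerdockEntry m P (u1, u2) (a11, a21, b1) * kerdockEntry m P (u1, u2) (a12, a22, b2) := by
      apply Fintype.sum_eq_single
      intro u hu
      rcases (not_and_or.mp (fun h => hu ((hsup u).mp h))) with h | h
      · rw [not_ne_iff.mp h, zero_mul]
      · rw [not_ne_iff.mp h, mul_zero]
    rw [hsum, kerdockEntry, kerdockEntry, if_pos hcond.1, if_pos hcond.2]
    rw [abs_mul, abs_mul, abs_mul, abs_pow, abs_pow, abs_neg, abs_one, one_pow, one_pow,
      mul_one, abs_inv, abs_of_nonneg (Real.sqrt_nonneg _),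
      ← mul_inv, Real.mul_self_sqrt (by positivity)]
end

section
/- The coherence of the sparse Kerdock matrix S^m equals 2^{-m}: for any two distinct columns s_i, s_j of S^m, the quantity |⟨s_i, s_j⟩| / (‖s_i‖₂ ‖s_j‖₂) is at most 2^{-m}, and there exists a pair of distinct columns attaining this value. -/
lemma zmod2_sub_iff : ∀ a b x y : ZMod 2, (a - x = b - y ↔ x + y = a + b) := by decide

lemma bv_sub_eq_sub_iff {m : ℕ} (a b x y : BV m) : a - x = b - y ↔ x + y = a + b := by
  rw [funext_iff, funext_iff]
  exact forall_congr' fun i => zmod2_sub_iff _ _ _ _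

lemma sign_sq (k : ℕ) : ((-1:ℝ)^k)^2 = 1 := by
  rw [← pow_mul, mul_comm, pow_mul, neg_one_sq, one_pow]

lemma inv_sqrt_sq (m : ℕ) : ((Real.sqrt (2^m))⁻¹)^2 = ((2:ℝ)^m)⁻¹ := by
  rw [inv_pow, Real.sq_sqrt (by positivity)]

lemma neg_one_pow_val_add (x y : ZMod 2) :
    ((-1:ℝ))^((x+y).val) = (-1:ℝ)^(x.val) * (-1:ℝ)^(y.val) := by
  rw [ZMod.val_add, ← neg_one_pow_eq_pow_mod_two, pow_add]

lemma norm_col (m : ℕ) (P : BV m → Matrix (Fin m) (Fin m) (ZMod 2)) (c : KCol m) :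
    ∑ u : KRow m, (kerdockEntry m P u c)^2 = 1 := by
  rw [Fintype.sum_prod_type]
  have h1 : ∀ u1 : BV m, ∑ u2 : BV m, (kerdockEntry m P (u1, u2) c)^2 = ((2:ℝ)^m)⁻¹ := by
    intro u1
    have : ∀ u2 : BV m, (kerdockEntry m P (u1, u2) c)^2 =
        if u2 = c.2.1 - Matrix.vecMul u1 (P c.2.2) then ((2:ℝ)^m)⁻¹ else 0 := by
      intro u2
      rw [kerdockEntry]
      by_cases h : Matrix.vecMul u1 (P c.2.2) + u2 = c.2.1
      · rw [if_pos h, if_pos (eq_sub_of_add_eq' h), mul_pow, sign_sq, inv_sqrt_sq, mul_one]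
      · rw [if_neg h, if_neg fun h' => h (by rw [h']; abel), zero_pow (by norm_num : (2:ℕ) ≠ 0)]
    simp only [this]
    rw [Finset.sum_ite_eq' Finset.univ, if_pos (Finset.mem_univ _)]
  simp only [h1, Finset.sum_const, Finset.card_univ]
  have : (Fintype.card (BV m) : ℝ) = 2^m := by
    simp [Fintype.card_fun]
  rw [nsmul_eq_mul, this, mul_inv_cancel₀ (by positivity)]

lemma inner_eq (m : ℕ) (P : BV m → Matrix (Fin m) (Fin m) (ZMod 2)) (c1 c2 : KCol m) :
    ∑ u : KRow m, kerdockEntry m P u c1 * kerdockEntry m P u c2 =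
    ∑ u1 : BV m, if Matrix.vecMul u1 (P c1.2.2) + Matrix.vecMul u1 (P c2.2.2) = c1.2.1 + c2.2.1
      then ((2:ℝ)^m)⁻¹ * (-1:ℝ)^((∑ i, u1 i * (c1.1 i + c2.1 i)).val) else 0 := by
  rw [Fintype.sum_prod_type]
  refine Finset.sum_congr rfl fun u1 _ => ?_
  have key : ∀ u2 : BV m, kerdockEntry m P (u1, u2) c1 * kerdockEntry m P (u1, u2) c2 =
      if u2 = c1.2.1 - Matrix.vecMul u1 (P c1.2.2) then
        (if u2 = c2.2.1 - Matrix.vecMul u1 (P c2.2.2) then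
          ((2:ℝ)^m)⁻¹ * (-1:ℝ)^((∑ i, u1 i * (c1.1 i + c2.1 i)).val) else 0) else 0 := by
    intro u2
    simp only [kerdockEntry]
    have e1 : (Matrix.vecMul u1 (P c1.2.2) + u2 = c1.2.1) ↔
        (u2 = c1.2.1 - Matrix.vecMul u1 (P c1.2.2)) :=
      ⟨fun h => eq_sub_of_add_eq' h, fun h => by rw [h]; abel⟩
    have e2 : (Matrix.vecMul u1 (P c2.2.2) + u2 = c2.2.1) ↔
        (u2 = c2.2.1 - Matrix.vecMul u1 (P c2.2.2)) :=
      ⟨fun h => eq_sub_of_add_eq' h, fun h => by rw [h]; abel⟩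
    rw [if_congr e1 rfl rfl, if_congr e2 rfl rfl, ite_zero_mul_ite_zero, ite_and]
    congr 1
    · have : ∑ i, u1 i * (c1.1 i + c2.1 i) = (∑ i, u1 i * c1.1 i) + ∑ i, u1 i * c2.1 i := by
        simp [mul_add, Finset.sum_add_distrib]
      rw [this, neg_one_pow_val_add]
      rw [← inv_sqrt_sq]
      ring
  simp only [key]
  rw [Finset.sum_ite_eq' Finset.univ, if_pos (Finset.mem_univ _)]
  congr 1
  rw [eq_comm, bv_sub_eq_sub_iff]

lemma char_sum {m : ℕ} (v : BV m) (hv : v ≠ 0) :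
    ∑ u : BV m, ((-1:ℝ))^((∑ i, u i * v i).val) = 0 := by
  obtain ⟨i0, hi0⟩ : ∃ i0, v i0 ≠ 0 := by
    by_contra h; push_neg at h; exact hv (funext h)
  have hv1 : v i0 = 1 := by
    have : ∀ a : ZMod 2, a ≠ 0 → a = 1 := by decide
    exact this _ hi0
  set σ : BV m ≃ BV m :=
    { toFun := fun u => Function.update u i0 (u i0 + 1)
      invFun := fun u => Function.update u i0 (u i0 + 1)
      left_inv := fun u => by
        ext i
        by_cases h : i = i0 <;> simp [Function.update_apply, h]
        have : ∀ a : ZMod 2, a + 1 + 1 = a := by decide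
        exact this _
      right_inv := fun u => by
        ext i
        by_cases h : i = i0 <;> simp [Function.update_apply, h]
        have : ∀ a : ZMod 2, a + 1 + 1 = a := by decide
        exact this _ } with hσ
  have hflip : ∀ u : BV m, ((-1:ℝ))^((∑ i, (σ u) i * v i).val) =
      -((-1:ℝ))^((∑ i, u i * v i).val) := by
    intro u
    have hsum : ∑ i, (σ u) i * v i = (∑ i, u i * v i) + 1 := by
      have h1 : ∀ i, (σ u) i * v i = u i * v i + (if i = i0 then v i0 else 0) := by
        intro i
        by_cases h : i = i0
        · subst h; simp [hσ, Function.update_apply, add_mul, hv1]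
        · simp [hσ, Function.update_apply, h]
      rw [Finset.sum_congr rfl fun i _ => h1 i, Finset.sum_add_distrib,
        Finset.sum_ite_eq' Finset.univ, if_pos (Finset.mem_univ _), hv1]
    rw [hsum, neg_one_pow_val_add]
    have : ((1:ZMod 2)).val = 1 := rfl
    rw [this, pow_one]
    ring
  have hS : ∑ u : BV m, ((-1:ℝ))^((∑ i, u i * v i).val)
      = -∑ u : BV m, ((-1:ℝ))^((∑ i, u i * v i).val) := by
    conv_lhs => rw [← Equiv.sum_comp σ (fun u => ((-1:ℝ))^((∑ i, u i * v i).val))]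
    rw [← Finset.sum_neg_distrib]
    exact Finset.sum_congr rfl fun u _ => hflip u
  linarith [hS]

lemma bv_add_eq_zero_iff {m : ℕ} (x y : BV m) : x + y = 0 ↔ x = y := by
  rw [funext_iff, funext_iff]
  refine forall_congr' fun i => ?_
  have : ∀ a b : ZMod 2, (a + b = 0 ↔ a = b) := by decide
  exact this _ _

lemma inner_abs (m : ℕ) (P : BV m → Matrix (Fin m) (Fin m) (ZMod 2))
    (hP : ∀ b b', b ≠ b' → IsUnit (P b + P b')) (c1 c2 : KCol m) (h : c1 ≠ c2) :
    |∑ u : KRow m, kerdockEntry m P u c1 * kerdockEntry m P u c2|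
      = (if c1.2.2 = c2.2.2 then 0 else ((2:ℝ)^m)⁻¹) := by
  obtain ⟨a1, a2, b⟩ := c1
  obtain ⟨a1', a2', b'⟩ := c2
  rw [inner_eq]
  simp only
  by_cases hb : b = b'
  · rw [if_pos hb]
    subst hb
    have hcond : ∀ u1 : BV m,
        (Matrix.vecMul u1 (P b) + Matrix.vecMul u1 (P b) = a2 + a2') ↔ (a2 = a2') := by
      intro u1
      have : Matrix.vecMul u1 (P b) + Matrix.vecMul u1 (P b) = 0 := by
        ext i
        have : ∀ a : ZMod 2, a + a = 0 := by decide
        exact this _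
      rw [this, eq_comm, bv_add_eq_zero_iff]
    by_cases ha2 : a2 = a2'
    · -- then a1 ≠ a1'
      have ha1 : a1 ≠ a1' := by
        rintro rfl; exact h (by rw [ha2])
      have : ∑ u1 : BV m, (if Matrix.vecMul u1 (P b) + Matrix.vecMul u1 (P b) = a2 + a2'
          then ((2:ℝ)^m)⁻¹ * (-1:ℝ)^((∑ i, u1 i * (a1 i + a1' i)).val) else 0)
          = ((2:ℝ)^m)⁻¹ * ∑ u1 : BV m, (-1:ℝ)^((∑ i, u1 i * ((a1 + a1') i)).val) := by
        rw [Finset.mul_sum]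
        refine Finset.sum_congr rfl fun u1 _ => ?_
        rw [if_pos ((hcond u1).2 ha2)]
        rfl
      rw [this, char_sum _ (fun hc => ha1 ((bv_add_eq_zero_iff a1 a1').1 hc)), mul_zero, abs_zero]
    · have : ∀ u1 : BV m, (if Matrix.vecMul u1 (P b) + Matrix.vecMul u1 (P b) = a2 + a2'
          then ((2:ℝ)^m)⁻¹ * (-1:ℝ)^((∑ i, u1 i * (a1 i + a1' i)).val) else 0) = 0 := by
        intro u1
        rw [if_neg (fun hc => ha2 ((hcond u1).1 hc))]
      rw [Finset.sum_congr rfl fun u1 _ => this u1, Finset.sum_const, smul_zero, abs_zero]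
  · rw [if_neg hb]
    have hA := hP b b' hb
    set A := P b + P b' with hAdef
    have hdet : IsUnit A.det := (Matrix.isUnit_iff_isUnit_det A).1 hA
    set u0 : BV m := Matrix.vecMul (a2 + a2') A⁻¹ with hu0
    have hcond : ∀ u1 : BV m,
        (Matrix.vecMul u1 (P b) + Matrix.vecMul u1 (P b') = a2 + a2') ↔ u1 = u0 := by
      intro u1
      rw [← Matrix.vecMul_add]
      constructor
      · intro hc
        rw [hu0, ← hc, Matrix.vecMul_vecMul, Matrix.mul_nonsing_inv A hdet, Matrix.vecMul_one]
      · intro hc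
        rw [hc, hu0, Matrix.vecMul_vecMul, Matrix.nonsing_inv_mul A hdet, Matrix.vecMul_one]
    have : ∑ u1 : BV m, (if Matrix.vecMul u1 (P b) + Matrix.vecMul u1 (P b') = a2 + a2'
        then ((2:ℝ)^m)⁻¹ * (-1:ℝ)^((∑ i, u1 i * (a1 i + a1' i)).val) else 0)
        = ((2:ℝ)^m)⁻¹ * (-1:ℝ)^((∑ i, u0 i * (a1 i + a1' i)).val) := by
      rw [Finset.sum_congr rfl fun u1 _ => if_congr (hcond u1) rfl rfl,
        Finset.sum_ite_eq' Finset.univ, if_pos (Finset.mem_univ _)]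
    rw [this, abs_mul, abs_pow, abs_neg, abs_one, one_pow, mul_one,
      abs_of_pos (by positivity)]

/-- The coherence of the sparse Kerdock matrix `S^m` equals `2^{-m}`. -/
theorem sparse_kerdock_coherence (m : ℕ) (hm : 1 ≤ m)
    (P : BV m → Matrix (Fin m) (Fin m) (ZMod 2)) (hP : IsKerdockSet P) :
    (∀ c1 c2 : KCol m, c1 ≠ c2 →
      |∑ u : KRow m, kerdockEntry m P u c1 * kerdockEntry m P u c2| /
        (Real.sqrt (∑ u : KRow m, (kerdockEntry m P u c1) ^ 2) *
          Real.sqrt (∑ u : KRow m, (kerdockEntry m P u c2) ^ 2)) ≤ ((2 : ℝ) ^ m)⁻¹) ∧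
    (∃ c1 c2 : KCol m, c1 ≠ c2 ∧
      |∑ u : KRow m, kerdockEntry m P u c1 * kerdockEntry m P u c2| /
        (Real.sqrt (∑ u : KRow m, (kerdockEntry m P u c1) ^ 2) *
          Real.sqrt (∑ u : KRow m, (kerdockEntry m P u c2) ^ 2)) = ((2 : ℝ) ^ m)⁻¹) := by
  have hnorm : ∀ c : KCol m, Real.sqrt (∑ u : KRow m, (kerdockEntry m P u c) ^ 2) = 1 := by
    intro c; rw [norm_col, Real.sqrt_one]
  constructor
  · intro c1 c2 hc
    rw [hnorm, hnorm, mul_one, div_one, inner_abs m P hP.2 c1 c2 hc]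
    split
    · positivity
    · exact le_refl _
  · set i : Fin m := ⟨0, hm⟩ with hi
    set b1 : BV m := fun _ => 1 with hb1
    have hb : (0 : BV m) ≠ b1 := by
      intro h
      have := congrFun h i
      simp [hb1] at this
    refine ⟨(0, 0, 0), (0, 0, b1), ?_, ?_⟩
    · intro h
      exact hb (congrArg (fun c : KCol m => c.2.2) h)
    · have hc : ((0 : BV m), (0 : BV m), (0 : BV m)) ≠ ((0 : BV m), (0 : BV m), b1) := by
        intro h
        exact hb (congrArg (fun c : KCol m => c.2.2) h)
      rw [hnorm, hnorm, mul_one, div_one, inner_abs m P hP.2 _ _ hc]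
      exact if_neg hb
end

section
/- Fix a query index (a1*, a2*, b*) and let R* = {(u1, u2) : u1 (P b*) + u2 = a2*} be the set of removed rows. Then for every column of S^m indexed by (a1', a2', b') with b' ≠ b*, exactly one row in the support of that column belongs to R*; that is, there is a unique (u1, u2) satisfying both u1 (P b') + u2 = a2' and u1 (P b*) + u2 = a2*. -/
/-- For a query index `(a1*, a2*, b*)` and a column `(a1', a2', b')` with `b' ≠ b*`,
exactly one support row of that column lies in `R*`. -/
theorem sparse_kerdock_one_erasure (m : ℕ) (hm : 1 ≤ m)
    (P : BV m → Matrix (Fin m) (Fin m) (ZMod 2)) (hP : IsKerdockSet P)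
    (a1s a2s bs : BV m) (a1' a2' b' : BV m) (hb : b' ≠ bs) :
    ∃! u : KRow m,
      Matrix.vecMul u.1 (P b') + u.2 = a2' ∧ Matrix.vecMul u.1 (P bs) + u.2 = a2s := by
  have hM : IsUnit (P b' + P bs) := hP.2 b' bs hb
  set M := P b' + P bs with hMdef
  have hdet := (Matrix.isUnit_iff_isUnit_det M).mp hM
  have h20 : (2 : ZMod 2) = 0 := rfl
  have key : ∀ v1 : BV m, Matrix.vecMul v1 M = a2' + a2s ↔
      v1 = Matrix.vecMul (a2' + a2s) M⁻¹ := by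
    intro v1
    constructor
    · intro h
      have := congrArg (fun w => Matrix.vecMul w M⁻¹) h
      simpa [Matrix.vecMul_vecMul, Matrix.mul_nonsing_inv M hdet] using this
    · rintro rfl
      rw [Matrix.vecMul_vecMul, Matrix.nonsing_inv_mul M hdet, Matrix.vecMul_one]
  set w1 := Matrix.vecMul (a2' + a2s) M⁻¹ with hw1
  have h1 : Matrix.vecMul w1 (P b') + Matrix.vecMul w1 (P bs) = a2' + a2s := by
    have := (key w1).mpr rfl
    rwa [hMdef, Matrix.vecMul_add] at this
  refine ⟨(w1, a2' + Matrix.vecMul w1 (P b')), ⟨?_, ?_⟩, ?_⟩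
  · funext i
    simp only [Pi.add_apply]
    linear_combination (Matrix.vecMul w1 (P b') i) * h20
  · funext i
    simp only [Pi.add_apply]
    have e := congrFun h1 i
    simp only [Pi.add_apply] at e
    linear_combination e + (a2' i) * h20
  · rintro ⟨v1, v2⟩ ⟨h1', h2'⟩
    simp only at h1' h2'
    have hv1 : Matrix.vecMul v1 M = a2' + a2s := by
      rw [hMdef, Matrix.vecMul_add]
      funext i
      simp only [Pi.add_apply]
      have e1 := congrFun h1' i
      have e2 := congrFun h2' i
      simp only [Pi.add_apply] at e1 e2
      linear_combination e1 + e2 - (v2 i) * h20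
    have hv1' : v1 = w1 := (key v1).mp hv1
    have hv2 : v2 = a2' + Matrix.vecMul v1 (P b') := by
      funext i
      simp only [Pi.add_apply]
      have e := congrFun h1' i
      simp only [Pi.add_apply] at e
      linear_combination e - (Matrix.vecMul v1 (P b') i) * h20
    rw [Prod.mk.injEq]
    exact ⟨hv1', by rw [hv2, hv1']⟩
end

section
/- Fix a query index (a1*, a2*, b*) and let R* = {(u1, u2) : u1 (P b*) + u2 = a2*} be the set of removed rows. Let (a1^1, a2, b) and (a1^2, a2, b) with b ≠ b* index two columns of S^m sharing the same a2 and b (and hence orthogonal in S^m). Then the unique support row of each column lying in R* is the same row for both columns. -/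
/-- For a query index `(a1*, a2*, b*)` and two columns `(a1^1, a2, b)` and `(a1^2, a2, b)`
with `b ≠ b*`, the unique support row of each column lying in `R*` is the same row. -/
theorem sparse_kerdock_same_erased_row (m : ℕ) (hm : 1 ≤ m)
    (P : BV m → Matrix (Fin m) (Fin m) (ZMod 2)) (hP : IsKerdockSet P)
    (a1s a2s bs : BV m) (a11 a12 a2 b : BV m) (hb : b ≠ bs) :
    ∀ u v : KRow m,
      (kerdockEntry m P u (a11, a2, b) ≠ 0 ∧ Matrix.vecMul u.1 (P bs) + u.2 = a2s) →
      (kerdockEntry m P v (a12, a2, b) ≠ 0 ∧ Matrix.vecMul v.1 (P bs) + v.2 = a2s) →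
      u = v := by
  rintro ⟨u1, u2⟩ ⟨v1, v2⟩ ⟨hu, hus⟩ ⟨hv, hvs⟩
  simp only [kerdockEntry] at hu hv
  have hub : Matrix.vecMul u1 (P b) + u2 = a2 := by
    by_contra h; simp [h] at hu
  have hvb : Matrix.vecMul v1 (P b) + v2 = a2 := by
    by_contra h; simp [h] at hv
  obtain ⟨M, hM⟩ := hP.2 b bs hb
  have hc : ∀ w : BV m, w + w = 0 := fun w => by
    funext i; exact CharTwo.add_self_eq_zero _
  have key : Matrix.vecMul u1 (P b + P bs) = Matrix.vecMul v1 (P b + P bs) := by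
    have h1 : Matrix.vecMul u1 (P b + P bs) = a2 + a2s := by
      rw [Matrix.vecMul_add, ← hub, ← hus]
      rw [add_add_add_comm, hc, add_zero]
    have h2 : Matrix.vecMul v1 (P b + P bs) = a2 + a2s := by
      rw [Matrix.vecMul_add, ← hvb, ← hvs]
      rw [add_add_add_comm, hc, add_zero]
    rw [h1, h2]
  have h1 : u1 = v1 := by
    have := congrArg (fun w => Matrix.vecMul w ((↑M : Matrix (Fin m) (Fin m) (ZMod 2))⁻¹)) key
    simp only [← hM, Matrix.vecMul_vecMul,
      Matrix.mul_nonsing_inv _ ((Matrix.isUnit_iff_isUnit_det _).mp M.isUnit),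
      Matrix.vecMul_one] at this
    exact this
  have h2 : u2 = v2 := by
    have := hub.trans hvb.symm
    rw [h1] at this
    exact add_left_cancel this
  rw [h1, h2]
end

section
/- Fix a query index (a1*, a2*, b*). Let two columns of S^m be indexed by (a1^1, a2^1, b1) and (a1^2, a2^2, b2) with b1 ≠ b2 and with neither column removed by the query (i.e. (a2^i, b^i) ≠ (a2*, b*) for i = 1, 2), and let s1, s2 be the corresponding columns of the collapsed matrix S^m_q. If the unique common support row of the two original columns lies in R* = {(u1, u2) : u1 (P b*) + u2 = a2*}, then ⟨s1, s2⟩ = 0; otherwise |⟨s1, s2⟩| = 2^{-m}. -/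
lemma kerdock_uniq {m : ℕ} (P : BV m → Matrix (Fin m) (Fin m) (ZMod 2))
    (hP : IsKerdockSet P) (b1 b2 : BV m) (hb : b1 ≠ b2) (a21 a22 : BV m)
    (u v : KRow m)
    (hu1 : Matrix.vecMul u.1 (P b1) + u.2 = a21)
    (hu2 : Matrix.vecMul u.1 (P b2) + u.2 = a22)
    (hv1 : Matrix.vecMul v.1 (P b1) + v.2 = a21)
    (hv2 : Matrix.vecMul v.1 (P b2) + v.2 = a22) : v = u := by
  have hM := hP.2 b1 b2 hb
  have htwo : (2 : ZMod 2) = 0 := by decide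
  have key : ∀ w : KRow m, Matrix.vecMul w.1 (P b1) + w.2 = a21 →
      Matrix.vecMul w.1 (P b2) + w.2 = a22 →
      Matrix.vecMul w.1 (P b1 + P b2) = a21 + a22 := by
    intro w h1 h2
    rw [Matrix.vecMul_add]
    ext i
    have e1 := congrFun h1 i
    have e2 := congrFun h2 i
    simp only [Pi.add_apply] at e1 e2 ⊢
    linear_combination e1 + e2 - w.2 i * htwo
  have h3 : Matrix.vecMul v.1 (P b1 + P b2) = Matrix.vecMul u.1 (P b1 + P b2) := by
    rw [key u hu1 hu2, key v hv1 hv2]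
  have hmul : (P b1 + P b2) * (P b1 + P b2)⁻¹ = 1 :=
    Matrix.mul_nonsing_inv _ ((Matrix.isUnit_iff_isUnit_det _).mp hM)
  have h4 : v.1 = u.1 := by
    have := congrArg (fun x => Matrix.vecMul x (P b1 + P b2)⁻¹) h3
    simpa [Matrix.vecMul_vecMul, hmul, Matrix.vecMul_one] using this
  have h5 : v.2 = u.2 := by
    rw [h4] at hv1
    exact add_left_cancel (hv1.trans hu1.symm)
  exact Prod.ext h4 h5

lemma kerdock_cond {m : ℕ} (P : BV m → Matrix (Fin m) (Fin m) (ZMod 2))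
    (u : KRow m) (c : KCol m) (h : kerdockEntry m P u c ≠ 0) :
    Matrix.vecMul u.1 (P c.2.2) + u.2 = c.2.1 := by
  by_contra hc
  exact h (by simp [kerdockEntry, hc])


/-- For two columns of `S^m` with `b1 ≠ b2`, neither removed by the query: if their unique
common support row lies in `R*` then the collapsed columns are orthogonal; otherwise the
absolute value of the collapsed inner product equals `2^{-m}`. -/
theorem sparse_kerdock_collapsed_diff_b (m : ℕ) (hm : 1 ≤ m)
    (P : BV m → Matrix (Fin m) (Fin m) (ZMod 2)) (hP : IsKerdockSet P)
    (a1s a2s bs : BV m) (a11 a21 b1 a12 a22 b2 : BV m) (hb : b1 ≠ b2)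
    (h1 : ¬(a21 = a2s ∧ b1 = bs)) (h2 : ¬(a22 = a2s ∧ b2 = bs)) :
    ∀ u : KRow m,
      (kerdockEntry m P u (a11, a21, b1) ≠ 0 ∧ kerdockEntry m P u (a12, a22, b2) ≠ 0) →
      ((Matrix.vecMul u.1 (P bs) + u.2 = a2s →
        ∑ v ∈ Finset.univ.filter (fun v : KRow m => Matrix.vecMul v.1 (P bs) + v.2 ≠ a2s),
          kerdockEntry m P v (a11, a21, b1) * kerdockEntry m P v (a12, a22, b2) = 0) ∧
      (Matrix.vecMul u.1 (P bs) + u.2 ≠ a2s →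
        |∑ v ∈ Finset.univ.filter (fun v : KRow m => Matrix.vecMul v.1 (P bs) + v.2 ≠ a2s),
          kerdockEntry m P v (a11, a21, b1) * kerdockEntry m P v (a12, a22, b2)|
          = ((2 : ℝ) ^ m)⁻¹)) := by
  rintro u ⟨hn1, hn2⟩
  have hc1 := kerdock_cond P u _ hn1
  have hc2 := kerdock_cond P u _ hn2
  have key : ∀ v : KRow m,
      kerdockEntry m P v (a11, a21, b1) * kerdockEntry m P v (a12, a22, b2) ≠ 0 → v = u := by
    intro v hz
    have hz1 : kerdockEntry m P v (a11, a21, b1) ≠ 0 := left_ne_zero_of_mul hz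
    have hz2 : kerdockEntry m P v (a12, a22, b2) ≠ 0 := right_ne_zero_of_mul hz
    exact kerdock_uniq P hP b1 b2 hb a21 a22 u v hc1 hc2
      (kerdock_cond P v _ hz1) (kerdock_cond P v _ hz2)
  constructor
  · intro hu
    apply Finset.sum_eq_zero
    intro v hv
    by_contra hz
    rw [key v hz] at hv
    simp [hu] at hv
  · intro hu
    rw [Finset.sum_eq_single_of_mem u (by simp [hu])
      (fun v _ hvu => by by_contra hz; exact hvu (key v hz))]
    simp only [kerdockEntry, if_pos hc1, if_pos hc2]
    have hs : Real.sqrt (2 ^ m) * Real.sqrt (2 ^ m) = 2 ^ m :=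
      Real.mul_self_sqrt (by positivity)
    rw [abs_mul, abs_mul, abs_mul, abs_pow, abs_pow, abs_neg, abs_one, one_pow, one_pow,
      mul_one, abs_inv, abs_of_nonneg (Real.sqrt_nonneg _), ← mul_inv, hs]
end

section
/- Fix a query index (a1*, a2*, b*). Every column of the collapsed codebook matrix S^m_q is nonzero: each remaining column has at least 2^m − 1 nonzero entries, and in particular its squared Euclidean norm is either (2^m − 1)/2^m (if its column index has b ≠ b*) or 1 (if its column index has b = b* and a2 ≠ a2*). -/
/-!
The nonzero entries of the column `(a1, a2, b)` of `S^m` sit exactly in the rows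
`(u1, u1 P_b + a2)`, one for each `u1`, and each has square `2^{-m}`. Such a row lies in `R*`
iff `u1 (P_{b*} + P_b) = a2* + a2`. For `b ≠ b*` the matrix `P_{b*} + P_b` is invertible, so
exactly one `u1` is lost; for `b = b*` the condition reads `a2 = a2*`, so none is.
-/

open Matrix Finset

section VecMulCount

variable {ι R : Type*} [Fintype ι] [DecidableEq ι] [CommRing R] [Fintype R] [DecidableEq R]

lemma card_filter_vecMul_ne_of_isUnit {M : Matrix ι ι R} (hM : IsUnit M) (v : ι → R) :
    #{x : ι → R | x ᵥ* M ≠ v} = Fintype.card R ^ Fintype.card ι - 1 := by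
  obtain ⟨x₀, hx₀⟩ := vecMul_surjective_iff_isUnit.mpr hM v
  have hsolve : ∀ x, x ᵥ* M = v ↔ x = x₀ := fun x =>
    ⟨fun hx => vecMul_injective_of_isUnit hM (hx.trans hx₀.symm), fun hx => hx ▸ hx₀⟩
  rw [filter_congr fun x _ => not_congr (hsolve x), filter_ne', card_erase_of_mem (mem_univ x₀),
    card_univ, Fintype.card_fun]

lemma card_filter_vecMul_add_ne_and_eq (A B : Matrix ι ι R) (a a' : ι → R) :
    #{u : (ι → R) × (ι → R) | u.1 ᵥ* A + u.2 ≠ a' ∧ u.1 ᵥ* B + u.2 = a} =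
      #{x : ι → R | x ᵥ* (A - B) ≠ a' - a} := by
  have hshift : ∀ x, x ᵥ* A + (a - x ᵥ* B) = x ᵥ* (A - B) + a := fun x => by
    rw [vecMul_sub]; abel
  refine card_nbij' Prod.fst (fun x => (x, a - x ᵥ* B)) ?_ ?_ ?_ ?_
  · rintro ⟨x, y⟩ hu
    simp only [coe_filter, mem_univ, true_and, Set.mem_ofPred_eq] at hu ⊢
    obtain ⟨hA, hB⟩ := hu
    rwa [eq_sub_iff_add_eq'.mpr hB, hshift, ne_eq, ← eq_sub_iff_add_eq] at hA
  · intro x hx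
    simp only [coe_filter, mem_univ, true_and, Set.mem_ofPred_eq, hshift] at hx ⊢
    exact ⟨fun h => hx (eq_sub_of_add_eq h), add_sub_cancel _ _⟩
  · rintro ⟨x, y⟩ hu
    simp only [coe_filter, mem_univ, true_and, Set.mem_ofPred_eq] at hu ⊢
    rw [← hu.2, add_sub_cancel_left]
  · intro x _
    rfl

end VecMulCount

section CollapsedColumn

variable {m : ℕ} (P : BV m → Matrix (Fin m) (Fin m) (ZMod 2))

lemma kerdockEntry_ne_zero_iff (u : KRow m) (c : KCol m) :
    kerdockEntry m P u c ≠ 0 ↔ u.1 ᵥ* P c.2.2 + u.2 = c.2.1 := by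
  unfold kerdockEntry
  split_ifs with h <;> simp [h]

lemma kerdockEntry_sq (u : KRow m) (c : KCol m) :
    kerdockEntry m P u c ^ 2 = if u.1 ᵥ* P c.2.2 + u.2 = c.2.1 then ((2 : ℝ) ^ m)⁻¹ else 0 := by
  unfold kerdockEntry
  split_ifs
  · rw [mul_pow, inv_pow, Real.sq_sqrt (by positivity), pow_right_comm, neg_one_sq, one_pow,
      mul_one]
  · exact zero_pow two_ne_zero

/-- The rows of `S^m_q`, i.e. those outside `R*`, on which the column `c` of `S^m` is nonzero. -/
def collapsedColumnSupport (a2s bs : BV m) (c : KCol m) : Finset (KRow m) :=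
  {u | u.1 ᵥ* P bs + u.2 ≠ a2s ∧ u.1 ᵥ* P c.2.2 + u.2 = c.2.1}

variable {P} {a2s bs : BV m} {c : KCol m}

lemma card_collapsedColumnSupport_of_ne (hP : IsKerdockSet P) (hb : c.2.2 ≠ bs) :
    #(collapsedColumnSupport P a2s bs c) = 2 ^ m - 1 := by
  have hunit : IsUnit (P bs - P c.2.2) := by
    rw [sub_eq_add_neg, ZModModule.neg_eq_self]
    exact hP.2 bs c.2.2 hb.symm
  rw [collapsedColumnSupport, card_filter_vecMul_add_ne_and_eq,
    card_filter_vecMul_ne_of_isUnit hunit, ZMod.card, Fintype.card_fin]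

lemma card_collapsedColumnSupport_of_eq (hb : c.2.2 = bs) (ha : c.2.1 ≠ a2s) :
    #(collapsedColumnSupport P a2s bs c) = 2 ^ m := by
  rw [collapsedColumnSupport, card_filter_vecMul_add_ne_and_eq, hb, sub_self,
    filter_true_of_mem fun x _ => ?_, card_univ, Fintype.card_fun, ZMod.card, Fintype.card_fin]
  rw [vecMul_zero, ne_comm, sub_ne_zero]
  exact ha.symm

variable (P a2s bs c)

lemma natCard_collapsedColumn_ne_zero :
    Nat.card {u : KRow m // u.1 ᵥ* P bs + u.2 ≠ a2s ∧ kerdockEntry m P u c ≠ 0} =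
      #(collapsedColumnSupport P a2s bs c) := by
  simp_rw [kerdockEntry_ne_zero_iff, Nat.card_eq_fintype_card, Fintype.card_subtype]
  rfl

lemma sum_collapsedColumn_kerdockEntry_sq :
    ∑ u ∈ univ.filter (fun u : KRow m => u.1 ᵥ* P bs + u.2 ≠ a2s), kerdockEntry m P u c ^ 2 =
      #(collapsedColumnSupport P a2s bs c) / 2 ^ m := by
  simp_rw [kerdockEntry_sq, sum_ite, sum_const_zero, add_zero, sum_const, filter_filter,
    nsmul_eq_mul, div_eq_mul_inv]
  rfl

end CollapsedColumn

theorem sparse_kerdock_collapsed_columns_nonzero_general (m : ℕ)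
    (P : BV m → Matrix (Fin m) (Fin m) (ZMod 2)) (hP : IsKerdockSet P)
    (a2s bs : BV m) (c : KCol m) (hc : ¬(c.2.1 = a2s ∧ c.2.2 = bs)) :
    2 ^ m - 1 ≤ Nat.card {u : KRow m //
        Matrix.vecMul u.1 (P bs) + u.2 ≠ a2s ∧ kerdockEntry m P u c ≠ 0} ∧
    (c.2.2 ≠ bs →
      ∑ u ∈ Finset.univ.filter (fun u : KRow m => Matrix.vecMul u.1 (P bs) + u.2 ≠ a2s),
        (kerdockEntry m P u c) ^ 2 = ((2 : ℝ) ^ m - 1) / 2 ^ m) ∧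
    (c.2.2 = bs → c.2.1 ≠ a2s →
      ∑ u ∈ Finset.univ.filter (fun u : KRow m => Matrix.vecMul u.1 (P bs) + u.2 ≠ a2s),
        (kerdockEntry m P u c) ^ 2 = 1) := by
  rw [natCard_collapsedColumn_ne_zero, sum_collapsedColumn_kerdockEntry_sq]
  refine ⟨?_, fun hb => ?_, fun hb ha => ?_⟩
  · by_cases hb : c.2.2 = bs
    · rw [card_collapsedColumnSupport_of_eq hb fun ha => hc ⟨ha, hb⟩]
      exact Nat.sub_le _ _
    · rw [card_collapsedColumnSupport_of_ne hP hb]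
  · rw [card_collapsedColumnSupport_of_ne hP hb, Nat.cast_sub Nat.one_le_two_pow]
    push_cast
    rfl
  · rw [card_collapsedColumnSupport_of_eq hb ha]
    push_cast
    exact div_self (by positivity)

/-- Every remaining column of the collapsed codebook matrix `S^m_q` is nonzero: it has at
least `2^m − 1` nonzero entries, and its squared norm is `(2^m − 1)/2^m` if `b ≠ b*`,
and `1` if `b = b*` (and `a2 ≠ a2*`). -/
theorem sparse_kerdock_collapsed_columns_nonzero (m : ℕ) (hm : 1 ≤ m)
    (P : BV m → Matrix (Fin m) (Fin m) (ZMod 2)) (hP : IsKerdockSet P)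
    (a1s a2s bs : BV m) (c : KCol m) (hc : ¬(c.2.1 = a2s ∧ c.2.2 = bs)) :
    2 ^ m - 1 ≤ Nat.card {u : KRow m //
        Matrix.vecMul u.1 (P bs) + u.2 ≠ a2s ∧ kerdockEntry m P u c ≠ 0} ∧
    (c.2.2 ≠ bs →
      ∑ u ∈ Finset.univ.filter (fun u : KRow m => Matrix.vecMul u.1 (P bs) + u.2 ≠ a2s),
        (kerdockEntry m P u c) ^ 2 = ((2 : ℝ) ^ m - 1) / 2 ^ m) ∧
    (c.2.2 = bs → c.2.1 ≠ a2s →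
      ∑ u ∈ Finset.univ.filter (fun u : KRow m => Matrix.vecMul u.1 (P bs) + u.2 ≠ a2s),
        (kerdockEntry m P u c) ^ 2 = 1) :=
  sparse_kerdock_collapsed_columns_nonzero_general m P hP a2s bs c hc
end

section
/- Fix a query index (a1*, a2*, b*). For any two distinct remaining column indices of the collapsed codebook matrix S^m_q that share the same b = b* (so both have a2 ≠ a2*), the corresponding columns s1, s2 of S^m_q are orthogonal: ⟨s1, s2⟩ = 0. -/
lemma neg_one_pow_add' (x y : ZMod 2) :
    ((-1:ℝ))^((x+y).val) = (-1)^x.val * (-1)^y.val := by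
  rw [ZMod.val_add, ← neg_one_pow_eq_pow_mod_two, pow_add]

lemma char_sum_zero (m : ℕ) (a : BV m) (ha : a ≠ 0) :
    ∑ u : BV m, (-1:ℝ)^((∑ i, u i * a i).val) = 0 := by
  obtain ⟨i0, hi0⟩ : ∃ i, a i ≠ 0 := by
    by_contra h; push_neg at h; exact ha (funext h)
  have ha1 : a i0 = 1 := by
    have : ∀ x : ZMod 2, x ≠ 0 → x = 1 := by decide
    exact this _ hi0
  set e : BV m := Pi.single i0 1 with he
  have hinv : Function.Involutive (fun u : BV m => u + e) := by
    intro u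
    have : e + e = 0 := by funext j; exact CharTwo.add_self_eq_zero _
    simp [add_assoc, this]
  have hflip : ∀ u : BV m,
      (-1:ℝ)^((∑ i, (u + e) i * a i).val) = -((-1:ℝ)^((∑ i, u i * a i).val)) := by
    intro u
    have h1 : ∑ i, (u + e) i * a i = (∑ i, u i * a i) + 1 := by
      have : ∑ i, e i * a i = 1 := by
        simp [he, Pi.single_apply, ite_mul, ha1]
      simp [Pi.add_apply, add_mul, Finset.sum_add_distrib, this]
    rw [h1, neg_one_pow_add']
    simp [ZMod.val_one]
  have key := Fintype.sum_bijective (fun u : BV m => u + e) hinv.bijective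
    (fun u => (-1:ℝ)^((∑ i, (u + e) i * a i).val))
    (fun u => (-1:ℝ)^((∑ i, u i * a i).val))
    (fun u => rfl)
  simp only [hflip, Finset.sum_neg_distrib] at key
  linarith [key]

/-- Two distinct remaining columns of the collapsed codebook matrix `S^m_q` sharing
`b = b*` (hence both with `a2 ≠ a2*`) are orthogonal. -/
theorem sparse_kerdock_collapsed_same_bstar_orthogonal (m : ℕ) (hm : 1 ≤ m)
    (P : BV m → Matrix (Fin m) (Fin m) (ZMod 2)) (hP : IsKerdockSet P)
    (a1s a2s bs : BV m) (a11 a21 a12 a22 : BV m)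
    (hne : (a11, a21) ≠ (a12, a22)) (h1 : a21 ≠ a2s) (h2 : a22 ≠ a2s) :
    ∑ u ∈ Finset.univ.filter (fun u : KRow m => Matrix.vecMul u.1 (P bs) + u.2 ≠ a2s),
      kerdockEntry m P u (a11, a21, bs) * kerdockEntry m P u (a12, a22, bs) = 0 := by
  by_cases h22 : a21 = a22
  · subst h22
    have h11 : a11 ≠ a12 := fun h => hne (by rw [h])
    have hext : ∑ u ∈ Finset.univ.filter (fun u : KRow m => Matrix.vecMul u.1 (P bs) + u.2 ≠ a2s),
        kerdockEntry m P u (a11, a21, bs) * kerdockEntry m P u (a12, a21, bs)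
        = ∑ u : KRow m, kerdockEntry m P u (a11, a21, bs) * kerdockEntry m P u (a12, a21, bs) := by
      apply Finset.sum_subset (Finset.filter_subset _ _)
      intro u _ hu
      simp only [Finset.mem_filter, Finset.mem_univ, true_and, not_not] at hu
      have : Matrix.vecMul u.1 (P bs) + u.2 ≠ a21 := by rw [hu]; exact h1.symm
      unfold kerdockEntry
      simp [this]
    rw [hext, Fintype.sum_prod_type]
    have hrow : ∀ u1 : BV m,
        (∑ u2 : BV m, kerdockEntry m P (u1, u2) (a11, a21, bs) * kerdockEntry m P (u1, u2) (a12, a21, bs))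
        = ((Real.sqrt (2 ^ m))⁻¹)^2 * ((-1:ℝ) ^ ((∑ i, u1 i * a11 i).val) * (-1:ℝ) ^ ((∑ i, u1 i * a12 i).val)) := by
      intro u1
      rw [Fintype.sum_eq_single (Matrix.vecMul u1 (P bs) + a21)]
      · have hc : Matrix.vecMul u1 (P bs) + (Matrix.vecMul u1 (P bs) + a21) = a21 := by
          rw [← add_assoc]
          have : Matrix.vecMul u1 (P bs) + Matrix.vecMul u1 (P bs) = 0 := by
            funext j; exact CharTwo.add_self_eq_zero _
          rw [this, zero_add]
        unfold kerdockEntry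
        simp only [hc, if_pos rfl, if_true]
        ring
      · intro u2 hu2
        have : Matrix.vecMul u1 (P bs) + u2 ≠ a21 := by
          intro h
          apply hu2
          rw [← h, ← add_assoc]
          have : Matrix.vecMul u1 (P bs) + Matrix.vecMul u1 (P bs) = 0 := by
            funext j; exact CharTwo.add_self_eq_zero _
          rw [this, zero_add]
        unfold kerdockEntry
        simp [this]
    simp only [hrow]
    rw [← Finset.mul_sum]
    have hχ : ∀ u1 : BV m,
        (-1:ℝ) ^ ((∑ i, u1 i * a11 i).val) * (-1:ℝ) ^ ((∑ i, u1 i * a12 i).val)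
        = (-1:ℝ) ^ ((∑ i, u1 i * (a11 + a12) i).val) := by
      intro u1
      have : ∑ i, u1 i * (a11 + a12) i = (∑ i, u1 i * a11 i) + ∑ i, u1 i * a12 i := by
        simp [Pi.add_apply, mul_add, Finset.sum_add_distrib]
      rw [this, neg_one_pow_add']
    simp only [hχ]
    have hane : a11 + a12 ≠ 0 := by
      intro h
      apply h11
      funext j
      have := congrFun h j
      simp only [Pi.add_apply, Pi.zero_apply] at this
      rwa [CharTwo.add_eq_iff_eq_add, zero_add] at this
    rw [char_sum_zero m (a11 + a12) hane, mul_zero]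
  · apply Finset.sum_eq_zero
    intro u _
    unfold kerdockEntry
    by_cases hA : Matrix.vecMul u.1 (P bs) + u.2 = a21
    · have hB : Matrix.vecMul u.1 (P bs) + u.2 ≠ a22 := by rw [hA]; exact h22
      simp [hB]
    · simp [hA]
end
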